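/- Let X and Y be n×n complex matrices and define R₁(λ) = e^{−λY/2} e^{−λX/2} e^{λ(X+Y)} for real λ. Then R₁ is differentiable, each R₁(λ) is invertible, and R₁′(λ)·R₁(λ)⁻¹ = −Y/2 + e^{−λY/2} ( e^{−λX/2} Y e^{λX/2} + X/2 ) e^{λY/2} for all λ. -/

import Mathlib

attribute [local instance] Matrix.linftyOpNormedAddCommGroup Matrix.linftyOpNormedRing
  Matrix.linftyOpNormedAlgebra Matrix.linftyOpNormedSpace

/-!
The right logarithmic derivative `F ↦ F' F⁻¹` turns products into conjugated sums,
`(FG)'(FG)⁻¹ = F'F⁻¹ + F (G'G⁻¹) F⁻¹`, and that of `t ↦ exp (f t • A)` is `f' • A`.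
Writing `R₁ = a (b c)` with `a = e^{−λY/2}`, `b = e^{−λX/2}`, `c = e^{λ(X+Y)}`, this gives
`R₁' R₁⁻¹ = −Y/2 + a (−X/2 + b (X + Y) b⁻¹) a⁻¹`, and `b X b⁻¹ = X` since `b` commutes with `X`.
-/

open NormedSpace

namespace Matrix

variable {n 𝕂 : Type*} [Fintype n] [DecidableEq n] [RCLike 𝕂]

theorem exp_mul_exp_inv (A : Matrix n n 𝕂) : exp A * (exp A)⁻¹ = 1 :=
  mul_nonsing_inv _ ((isUnit_iff_isUnit_det _).mp (isUnit_exp A))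

theorem exp_smul_inv (r : ℝ) (A : Matrix n n 𝕂) : (exp (r • A))⁻¹ = exp ((-r) • A) := by
  rw [← exp_neg, neg_smul]

theorem exp_smul_mul_add_mul_inv (r : ℝ) (A B : Matrix n n 𝕂) :
    exp (r • A) * (A + B) * (exp (r • A))⁻¹ = A + exp (r • A) * B * (exp (r • A))⁻¹ := by
  rw [mul_add, add_mul, ((Commute.refl A).smul_left r).exp_left.eq, mul_assoc A,
    exp_mul_exp_inv, mul_one]

theorem hasDerivAt_exp_smul_const_comp (A : Matrix n n 𝕂) {f : ℝ → ℝ} {f' t : ℝ}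
    (hf : HasDerivAt f f' t) :
    HasDerivAt (fun s => exp (f s • A)) (f' • (A * exp (f t • A))) t :=
  (hasDerivAt_exp_smul_const' (𝕂 := ℝ) A (f t)).scomp t hf

noncomputable def rlogDeriv (F : ℝ → Matrix n n 𝕂) (t : ℝ) : Matrix n n 𝕂 :=
  deriv F t * (F t)⁻¹

theorem rlogDeriv_mul {F G : ℝ → Matrix n n 𝕂} {t : ℝ} (hF : DifferentiableAt ℝ F t)
    (hG : DifferentiableAt ℝ G t) (hGt : IsUnit (G t)) :
    rlogDeriv (fun s => F s * G s) t = rlogDeriv F t + F t * rlogDeriv G t * (F t)⁻¹ := by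
  have hGG : G t * (G t)⁻¹ = 1 := mul_nonsing_inv _ ((isUnit_iff_isUnit_det _).mp hGt)
  have hd : deriv (fun s => F s * G s) t = deriv F t * G t + F t * deriv G t :=
    (hF.hasDerivAt.mul hG.hasDerivAt).deriv
  simp only [rlogDeriv, hd, mul_inv_rev, add_mul, mul_assoc]
  rw [← mul_assoc (G t), hGG, one_mul]

theorem rlogDeriv_exp_smul (A : Matrix n n 𝕂) {f : ℝ → ℝ} {f' t : ℝ} (hf : HasDerivAt f f' t) :
    rlogDeriv (fun s => exp (f s • A)) t = f' • A := by
  have hd : deriv (fun s => exp (f s • A)) t = f' • (A * exp (f t • A)) :=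
    (hasDerivAt_exp_smul_const_comp A hf).deriv
  rw [rlogDeriv, hd, smul_mul_assoc, mul_assoc, exp_mul_exp_inv, mul_one]

end Matrix

theorem deriv_R_one_mul_inv (m : ℕ) (X Y : Matrix (Fin m) (Fin m) ℂ)
    (R₁ : ℝ → Matrix (Fin m) (Fin m) ℂ)
    (hR₁ : R₁ = fun l : ℝ =>
      NormedSpace.exp ((-(l / 2)) • Y) * NormedSpace.exp ((-(l / 2)) • X) *
        NormedSpace.exp (l • (X + Y))) :
    Differentiable ℝ R₁ ∧
      ∀ l : ℝ, IsUnit (R₁ l) ∧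
        deriv R₁ l * (R₁ l)⁻¹ =
          -((1 / 2 : ℂ) • Y) +
            NormedSpace.exp ((-(l / 2)) • Y) *
              (NormedSpace.exp ((-(l / 2)) • X) * Y * NormedSpace.exp ((l / 2) • X) +
                (1 / 2 : ℂ) • X) *
              NormedSpace.exp ((l / 2) • Y) := by
  have hhalf (t : ℝ) : HasDerivAt (fun s : ℝ => -(s / 2)) (-(1 / 2)) t :=
    ((hasDerivAt_id t).div_const 2).neg
  have hY (t : ℝ) := (Matrix.hasDerivAt_exp_smul_const_comp Y (hhalf t)).differentiableAt
  have hX (t : ℝ) := (Matrix.hasDerivAt_exp_smul_const_comp X (hhalf t)).differentiableAt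
  have hXY (t : ℝ) :=
    (Matrix.hasDerivAt_exp_smul_const_comp (X + Y) (hasDerivAt_id' t)).differentiableAt
  refine ⟨fun t => hR₁ ▸ ((hY t).mul (hX t)).mul (hXY t), fun l => ⟨?_, ?_⟩⟩
  · exact hR₁ ▸ ((Matrix.isUnit_exp _).mul (Matrix.isUnit_exp _)).mul (Matrix.isUnit_exp _)
  have hR : R₁ = fun s => exp ((-(s / 2)) • Y) * (exp ((-(s / 2)) • X) * exp (s • (X + Y))) :=
    hR₁.trans (funext fun s => mul_assoc _ _ _)
  change Matrix.rlogDeriv R₁ l = _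
  rw [hR, Matrix.rlogDeriv_mul (hY l) ((hX l).fun_mul (hXY l))
      ((Matrix.isUnit_exp _).mul (Matrix.isUnit_exp _)),
    Matrix.rlogDeriv_mul (hX l) (hXY l) (Matrix.isUnit_exp _),
    Matrix.rlogDeriv_exp_smul Y (hhalf l), Matrix.rlogDeriv_exp_smul X (hhalf l),
    Matrix.rlogDeriv_exp_smul (X + Y) (hasDerivAt_id' l), one_smul,
    Matrix.exp_smul_mul_add_mul_inv, Matrix.exp_smul_inv, Matrix.exp_smul_inv, neg_neg]
  congr 1
  · module
  congr 2
  module
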